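/- Let x₀ ∈ ℝ², R > 0 and 0 < α < π/2, and write ω(θ) = (cos θ, sin θ). Let F : ℝ² → ℝ be a continuous function whose support is contained in the open set {x₀ + t ω(θ) : 0 < t < R, −α < θ < α}, and let ψ : ℝ → ℝ be a continuous function. Define ψ̃ : ℝ² \ {x₀} → ℝ by ψ̃(x) = ψ(arcsin((x − x₀)₂ / ‖x − x₀‖)) / ‖x − x₀‖, where (x − x₀)₂ denotes the second coordinate of x − x₀. Then ∫_{−α}^{α} ψ(θ) (∫_0^R F(x₀ + t ω(θ)) dt) dθ = ∫_{ℝ²} ψ̃(x) F(x) dx. -/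

import Mathlib

open MeasureTheory Real intervalIntegral
open Set

/-- The unit direction `ω(θ) = (cos θ, sin θ)` in the plane. -/
noncomputable def rayDir (θ : ℝ) : EuclideanSpace ℝ (Fin 2) := WithLp.toLp 2 ![Real.cos θ, Real.sin θ]

lemma rayDir_zero (θ : ℝ) : rayDir θ 0 = Real.cos θ := rfl
lemma rayDir_one (θ : ℝ) : rayDir θ 1 = Real.sin θ := rfl

lemma continuous_rayDir : Continuous rayDir := by
  have : Continuous fun θ => (WithLp.equiv 2 (Fin 2 → ℝ)).symm ![Real.cos θ, Real.sin θ] := by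
    apply Continuous.comp
    · exact (PiLp.continuousLinearEquiv 2 ℝ (fun _ : Fin 2 => ℝ)).symm.continuous
    · apply continuous_pi
      intro i
      fin_cases i <;> simp <;> fun_prop
  exact this

lemma norm_smul_rayDir (r θ : ℝ) (hr : 0 ≤ r) : ‖r • rayDir θ‖ = r := by
  rw [EuclideanSpace.norm_eq]
  simp only [PiLp.smul_apply, smul_eq_mul, Fin.sum_univ_two, rayDir_zero, rayDir_one,
    Real.norm_eq_abs, sq_abs]
  rw [show (r * Real.cos θ) ^ 2 + (r * Real.sin θ) ^ 2 = r ^ 2 by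
    have := Real.sin_sq_add_cos_sq θ; ring_nf; nlinarith [Real.sin_sq_add_cos_sq θ]]
  rw [Real.sqrt_sq hr]

lemma vec_eq (r θ : ℝ) :
    ((MeasurableEquiv.toLp 2 (Fin 2 → ℝ)).symm.symm
      (MeasurableEquiv.finTwoArrow.symm (r * Real.cos θ, r * Real.sin θ))) = r • rayDir θ := by
  ext i
  fin_cases i <;>
    simp [MeasurableEquiv.coe_toLp, MeasurableEquiv.finTwoArrow, rayDir]

/-- fan beam tomography pixel value as a dual pairing: for a continuous density `F`
supported in the open fan `{x₀ + t ω(θ) : 0 < t < R, −α < θ < α}` and a continuous sensitivity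
profile `ψ`,
`∫_{−α}^{α} ψ(θ) (∫_0^R F(x₀ + t ω(θ)) dt) dθ = ∫_{ℝ²} ψ̃(x) F(x) dx`,
where `ψ̃(x) = ψ(arcsin((x − x₀)₂ / ‖x − x₀‖)) / ‖x − x₀‖`. -/
theorem fanbeam_duality
    (x₀ : EuclideanSpace ℝ (Fin 2)) (R α : ℝ) (hR : 0 < R) (hα₀ : 0 < α) (hα : α < π / 2)
    (F : EuclideanSpace ℝ (Fin 2) → ℝ) (hF : Continuous F)
    (hsupp : Function.support F ⊆
      {x | ∃ t θ : ℝ, 0 < t ∧ t < R ∧ -α < θ ∧ θ < α ∧ x = x₀ + t • rayDir θ})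
    (ψ : ℝ → ℝ) (hψ : Continuous ψ) :
    (∫ θ in (-α)..α, ψ θ * ∫ t in (0:ℝ)..R, F (x₀ + t • rayDir θ)) =
      ∫ x, ψ (Real.arcsin ((x - x₀) 1 / ‖x - x₀‖)) / ‖x - x₀‖ * F x := by
  have hαπ : α ≤ π / 2 := le_of_lt hα
  -- the final integrand on (r, θ) space
  set K : ℝ × ℝ → ℝ := fun p => ψ p.2 * F (x₀ + p.1 • rayDir p.2) with hK
  have hKcont : Continuous K := by
    apply Continuous.mul (hψ.comp continuous_snd)
    exact hF.comp (continuous_const.add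
      ((continuous_fst.smul (continuous_rayDir.comp continuous_snd))))
  have hKint : IntegrableOn K (Ioo 0 R ×ˢ Ioo (-α) α) := by
    apply (hKcont.continuousOn.integrableOn_compact ((isCompact_Icc (a := (0:ℝ)) (b := R)).prod (isCompact_Icc (a := -α) (b := α)))).mono_set
    exact Set.prod_mono Ioo_subset_Icc_self Ioo_subset_Icc_self
  -- abbreviations
  set v : ℝ × ℝ → EuclideanSpace ℝ (Fin 2) := fun p =>
    (MeasurableEquiv.toLp 2 (Fin 2 → ℝ)).symm.symm (MeasurableEquiv.finTwoArrow.symm p) with hv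
  set G : EuclideanSpace ℝ (Fin 2) → ℝ :=
    fun x => ψ (Real.arcsin (x 1 / ‖x‖)) / ‖x‖ * F (x₀ + x) with hG
  -- Step 1: translation invariance
  have step1 : (∫ x, ψ (Real.arcsin ((x - x₀) 1 / ‖x - x₀‖)) / ‖x - x₀‖ * F x) = ∫ x, G x := by
    rw [← integral_add_right_eq_self
      (fun x => ψ (Real.arcsin ((x - x₀) 1 / ‖x - x₀‖)) / ‖x - x₀‖ * F x) x₀]
    congr 1; funext x
    rw [hG]; simp only [add_sub_cancel_right]
    rw [add_comm x x₀]
  -- Step 2: measure-preserving transfer to ℝ × ℝ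
  have step2 : (∫ x, G x) = ∫ p : ℝ × ℝ, G (v p) := by
    have h1 := MeasurePreserving.symm _ (EuclideanSpace.volume_preserving_symm_measurableEquiv_toLp (Fin 2))
    have h2 := MeasurePreserving.symm _ (volume_preserving_finTwoArrow ℝ)
    rw [← h1.integral_comp (MeasurableEquiv.toLp 2 (Fin 2 → ℝ)).symm.symm.measurableEmbedding G,
      ← h2.integral_comp MeasurableEquiv.finTwoArrow.symm.measurableEmbedding]
  -- Step 3: polar coordinates
  have step3 : (∫ p : ℝ × ℝ, G (v p))
      = ∫ p in polarCoord.target, p.1 • G (v (polarCoord.symm p)) :=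
    (integral_comp_polarCoord_symm fun p => G (v p)).symm
  -- Step 4: simplify the integrand on the target
  set H : ℝ × ℝ → ℝ :=
    fun p => ψ (Real.arcsin (Real.sin p.2)) * F (x₀ + p.1 • rayDir p.2) with hH
  have hvpolar : ∀ p : ℝ × ℝ, v (polarCoord.symm p) = p.1 • rayDir p.2 := fun p => vec_eq p.1 p.2
  have step4 : (∫ p in polarCoord.target, p.1 • G (v (polarCoord.symm p)))
      = ∫ p in polarCoord.target, H p := by
    apply setIntegral_congr_fun (polarCoord.open_target.measurableSet)
    rintro ⟨r, θ⟩ hp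
    have hr : 0 < r := hp.1
    have hnorm : ‖r • rayDir θ‖ = r := norm_smul_rayDir r θ hr.le
    show (r, θ).1 • G (v (polarCoord.symm (r, θ))) = H (r, θ)
    rw [hvpolar (r, θ), hG, hH]
    simp only [smul_eq_mul, PiLp.smul_apply, rayDir_one, hnorm]
    rw [mul_div_cancel_left₀ _ hr.ne']
    field_simp
  -- Step 5: shrink the integration set
  have hsub : Ioo (0:ℝ) R ×ˢ Ioo (-α) α ⊆ polarCoord.target := by
    rintro ⟨r, θ⟩ ⟨hr, hθ⟩
    refine ⟨hr.1, ?_, ?_⟩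
    · linarith [hθ.1, pi_pos, hα]
    · linarith [hθ.2, pi_pos, hα]
  have hvanish : ∀ p ∈ polarCoord.target \ (Ioo (0:ℝ) R ×ˢ Ioo (-α) α), H p = 0 := by
    rintro ⟨r, θ⟩ ⟨⟨hr, hθ⟩, hns⟩
    simp only [Set.mem_Ioi] at hr
    by_contra h
    have hFne : F (x₀ + r • rayDir θ) ≠ 0 := fun h0 => h (by rw [hH]; simp [h0])
    obtain ⟨t, θ', ht0, htR, hθ'1, hθ'2, heq⟩ := hsupp hFne
    have hkey : r • rayDir θ = t • rayDir θ' := add_left_cancel heq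
    have hrt : r = t := by
      have := congrArg norm hkey
      rwa [norm_smul_rayDir r θ hr.le, norm_smul_rayDir t θ' ht0.le] at this
    subst hrt
    have hray : rayDir θ = rayDir θ' := smul_right_injective _ hr.ne' hkey
    have hcos : Real.cos θ = Real.cos θ' := congrFun (congrArg WithLp.ofLp hray) 0
    have hsin : Real.sin θ = Real.sin θ' := congrFun (congrArg WithLp.ofLp hray) 1
    have hθ'mem : -(π/2) < θ' ∧ θ' < π/2 := ⟨by linarith, by linarith⟩
    have hcospos : 0 < Real.cos θ := by
      rw [hcos]; exact Real.cos_pos_of_mem_Ioo ⟨hθ'mem.1, hθ'mem.2⟩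
    have hθmem : -(π/2) < θ ∧ θ < π/2 := by
      constructor
      · by_contra hc; push_neg at hc
        have : Real.cos θ ≤ 0 := by
          rw [← Real.cos_neg]
          apply Real.cos_nonpos_of_pi_div_two_le_of_le (by linarith)
          simp only [mem_Ioo] at hθ; linarith [hθ.1]
        linarith
      · by_contra hc; push_neg at hc
        have : Real.cos θ ≤ 0 := by
          apply Real.cos_nonpos_of_pi_div_two_le_of_le hc
          simp only [mem_Ioo] at hθ; linarith [hθ.2]
        linarith
    have hθeq : θ = θ' := Real.injOn_sin
      ⟨hθmem.1.le, hθmem.2.le⟩ ⟨hθ'mem.1.le, hθ'mem.2.le⟩ hsin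
    exact hns ⟨⟨hr, by rwa [hθeq]⟩, by rw [hθeq]; exact ⟨hθ'1, hθ'2⟩⟩
  have step5 : (∫ p in polarCoord.target, H p)
      = ∫ p in Ioo (0:ℝ) R ×ˢ Ioo (-α) α, H p :=
    setIntegral_eq_of_subset_of_forall_diff_eq_zero
      polarCoord.open_target.measurableSet hsub hvanish
  -- Step 6: H = K on the small set
  have step6 : (∫ p in Ioo (0:ℝ) R ×ˢ Ioo (-α) α, H p)
      = ∫ p in Ioo (0:ℝ) R ×ˢ Ioo (-α) α, K p := by
    apply setIntegral_congr_fun (measurableSet_Ioo.prod measurableSet_Ioo)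
    rintro ⟨r, θ⟩ ⟨-, hθ⟩
    rw [hH, hK]
    simp only
    rw [Real.arcsin_sin (by linarith [hθ.1]) (by linarith [hθ.2])]
  -- Step 7: Fubini
  have step7 : (∫ p in Ioo (0:ℝ) R ×ˢ Ioo (-α) α, K p)
      = ∫ θ in Ioo (-α) α, ∫ r in Ioo (0:ℝ) R, K (r, θ) := by
    have hKint' : Integrable (Function.uncurry fun r θ => K (r, θ))
        ((volume.restrict (Ioo (0:ℝ) R)).prod (volume.restrict (Ioo (-α) α))) := by
      rw [Measure.prod_restrict]
      rw [← Measure.volume_eq_prod]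
      exact hKint
    rw [show (volume : Measure (ℝ × ℝ)) = volume.prod volume from Measure.volume_eq_prod ℝ ℝ]
    rw [setIntegral_prod K (by rw [← Measure.volume_eq_prod]; exact hKint)]
    exact integral_integral_swap hKint'
  -- Step 8: rewrite the LHS as iterated set integrals
  rw [step1, step2, step3, step4, step5, step6, step7]
  rw [intervalIntegral.integral_of_le (by linarith : -α ≤ α),
    integral_Ioc_eq_integral_Ioo]
  apply setIntegral_congr_fun measurableSet_Ioo
  intro θ hθ
  simp only
  rw [intervalIntegral.integral_of_le hR.le, integral_Ioc_eq_integral_Ioo,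
    ← MeasureTheory.integral_const_mul]
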